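/- For every $k\in\mathbf{ex}$ and every $\ell\in\{1,\dots,m\}$ one has $\Lambda_\mathbf{i}\big(\varphi'_\mathbf{i}(\mathbf{b}^k),\ \varphi'_\mathbf{i}(\varepsilon_\ell)\big)=2\,d_{i_k}\,\delta_{k\ell}$ (compatibility of the pair $(\Lambda_\mathbf{i},\tilde B_\mathbf{i})$, where $\tilde B_\mathbf{i}$ is the matrix with columns $\mathbf{b}^k$, $k\in\mathbf{ex}$). -/

import Mathlib

open Finset

/-- The weight lattice `𝒫`: the free abelian group with basis `{αᵢ, ωᵢ : i ∈ I}`,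
represented by pairs of coefficient vectors (first component: coefficients of the `αᵢ`,
second component: coefficients of the `ωᵢ`). -/
abbrev PLat (n : ℕ) := (Fin n → ℤ) × (Fin n → ℤ)

/-- The coroot lattice `𝒬^∨`: the free abelian group with basis `{αᵢ^∨ : i ∈ I}`,
represented by coefficient vectors. -/
abbrev QvLat (n : ℕ) := Fin n → ℤ

variable {n : ℕ}

/-- The basis element `α_j^∨` of `𝒬^∨`. -/
def coroot (j : Fin n) : QvLat n := fun k => if k = j then 1 else 0

/-- The basis element `α_j` of `𝒫`. -/
def alP (j : Fin n) : PLat n := (fun k => if k = j then 1 else 0, 0)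

/-- The basis element `ω_j` of `𝒫`. -/
def omP (j : Fin n) : PLat n := (0, fun k => if k = j then 1 else 0)

/-- The biadditive pairing `𝒬^∨ × 𝒫 → ℤ` with `(αᵢ^∨, α_j) = a_{ij}` and
`(αᵢ^∨, ω_j) = δ_{ij}`. -/
def pairQP (A : Fin n → Fin n → ℤ) (x : QvLat n) (lam : PLat n) : ℤ :=
  (∑ a, ∑ b, x a * A a b * lam.1 b) + ∑ a, x a * lam.2 a

/-- The simple reflection `sᵢ` on `𝒫`: `sᵢ α_j = α_j - a_{ij} αᵢ`,
`sᵢ ω_j = ω_j - δ_{ij} αᵢ`. -/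
def sP (A : Fin n → Fin n → ℤ) (a : Fin n) (lam : PLat n) : PLat n :=
  (fun j => if j = a then lam.1 a - ((∑ k, A a k * lam.1 k) + lam.2 a) else lam.1 j,
   lam.2)

/-- The simple reflection `sᵢ^∨` on `𝒬^∨`: `sᵢ^∨ α_j^∨ = α_j^∨ - a_{ji} αᵢ^∨`. -/
def sQ (A : Fin n → Fin n → ℤ) (a : Fin n) (x : QvLat n) : QvLat n :=
  fun j => if j = a then x a - ∑ k, A k a * x k else x j

/-- `w_ℓ = s_{i₁} ∘ ⋯ ∘ s_{i_ℓ}` on `𝒫` (with `w₀ = id`). -/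
def wP (A : Fin n → Fin n → ℤ) (ii : ℕ → Fin n) : ℕ → PLat n → PLat n
  | 0 => id
  | (l+1) => wP A ii l ∘ sP A (ii (l+1))

/-- `w_ℓ^∨ = s_{i₁}^∨ ∘ ⋯ ∘ s_{i_ℓ}^∨` on `𝒬^∨` (with `w₀ = id`). -/
def wQ (A : Fin n → Fin n → ℤ) (ii : ℕ → Fin n) : ℕ → QvLat n → QvLat n
  | 0 => id
  | (l+1) => wQ A ii l ∘ sQ A (ii (l+1))

/-- `k⁺ = min({ℓ : k < ℓ ≤ m, i_ℓ = i_k} ∪ {m+1})`. -/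
noncomputable def kplus (ii : ℕ → Fin n) (m k : ℕ) : ℕ :=
  sInf ({l | k < l ∧ l ≤ m ∧ ii l = ii k} ∪ {m+1})

/-- `k⁻ = max({ℓ : 1 ≤ ℓ < k, i_ℓ = i_k} ∪ {0})`. -/
noncomputable def kminus (ii : ℕ → Fin n) (k : ℕ) : ℕ :=
  sSup ({l | 1 ≤ l ∧ l < k ∧ ii l = ii k} ∪ {0})

/-- The standard basis vector `ε_k` of `ℤ^m` (1-based index), with the convention
`ε_s = 0` for `s ∉ {1,…,m}`. -/
def eps (m k : ℕ) : Fin m → ℤ := fun j => if (j : ℕ) + 1 = k then 1 else 0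

/-- `φ_𝐢(ε_k) = -ε_k - ε_{k⁻} - ∑_{ℓ : ℓ < k < ℓ⁺} a_{i_ℓ i_k} ε_ℓ`. -/
noncomputable def phiE (A : Fin n → Fin n → ℤ) (ii : ℕ → Fin n) (m k : ℕ) :
    Fin m → ℤ :=
  -(eps m k) - eps m (kminus ii k)
    - ∑ l : Fin m, (if (l:ℕ)+1 < k ∧ k < kplus ii m ((l:ℕ)+1)
        then A (ii ((l:ℕ)+1)) (ii k) else 0) • eps m ((l:ℕ)+1)

/-- The endomorphism `φ_𝐢` of `ℤ^m`, extended additively from its values on the basis. -/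
noncomputable def phiMap (A : Fin n → Fin n → ℤ) (ii : ℕ → Fin n) (m : ℕ)
    (v : Fin m → ℤ) : Fin m → ℤ :=
  ∑ k : Fin m, v k • phiE A ii m ((k:ℕ)+1)

/-- `φ'_𝐢(ε_ℓ) = -∑_{k=1}^{ℓ} (w_k^∨ α_{i_k}^∨, w_ℓ ω_{i_ℓ}) ε_k`. -/
def phiE' (A : Fin n → Fin n → ℤ) (ii : ℕ → Fin n) (m l : ℕ) : Fin m → ℤ :=
  -∑ k : Fin m, (if (k:ℕ)+1 ≤ l then
      pairQP A (wQ A ii ((k:ℕ)+1) (coroot (ii ((k:ℕ)+1)))) (wP A ii l (omP (ii l)))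
    else 0) • eps m ((k:ℕ)+1)

/-- The endomorphism `φ'_𝐢` of `ℤ^m`, extended additively from its values on the basis. -/
def phiMap' (A : Fin n → Fin n → ℤ) (ii : ℕ → Fin n) (m : ℕ)
    (v : Fin m → ℤ) : Fin m → ℤ :=
  ∑ l : Fin m, v l • phiE' A ii m ((l:ℕ)+1)

/-- `∂_𝐢 ε_k = ε_k - ε_{k⁻}`. -/
noncomputable def derE (ii : ℕ → Fin n) (m k : ℕ) : Fin m → ℤ :=
  eps m k - eps m (kminus ii k)

/-- The endomorphism `∂_𝐢` of `ℤ^m`. -/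
noncomputable def derMap (ii : ℕ → Fin n) (m : ℕ) (v : Fin m → ℤ) : Fin m → ℤ :=
  ∑ k : Fin m, v k • derE ii m ((k:ℕ)+1)

/-- `∫_𝐢 ε_k = ε_k + ε_{k⁻} + ε_{(k⁻)⁻} + ⋯` (summing along the chain `k > k⁻ > ⋯ > 0`). -/
noncomputable def intE (ii : ℕ → Fin n) (m : ℕ) (k : ℕ) : Fin m → ℤ :=
  if h : kminus ii k < k then eps m k + intE ii m (kminus ii k) else eps m k
termination_by k
decreasing_by exact h

/-- The endomorphism `∫_𝐢` of `ℤ^m`. -/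
noncomputable def intMap (ii : ℕ → Fin n) (m : ℕ) (v : Fin m → ℤ) : Fin m → ℤ :=
  ∑ k : Fin m, v k • intE ii m ((k:ℕ)+1)

/-- The skew-symmetric biadditive form `Λ_𝐢` on `ℤ^m` with
`Λ_𝐢(ε_k, ε_ℓ) = sgn(k-ℓ) c_{i_k i_ℓ}` where `c_{ij} = dᵢ a_{ij}`. -/
def LamF (A : Fin n → Fin n → ℤ) (d : Fin n → ℤ) (ii : ℕ → Fin n) (m : ℕ)
    (a b : Fin m → ℤ) : ℤ :=
  ∑ k : Fin m, ∑ l : Fin m, a k * b l *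
    ((((k:ℕ):ℤ) - ((l:ℕ):ℤ)).sign *
      (d (ii ((k:ℕ)+1)) * A (ii ((k:ℕ)+1)) (ii ((l:ℕ)+1))))

/-- The biadditive form `Φ_𝐢` on `ℤ^m` with `Φ_𝐢(ε_k,ε_ℓ) = -d_{i_k}` if `k = ℓ`,
`= -c_{i_ℓ i_k}` if `ℓ < k`, and `= 0` if `ℓ > k`. -/
def PhiF (A : Fin n → Fin n → ℤ) (d : Fin n → ℤ) (ii : ℕ → Fin n) (m : ℕ)
    (a b : Fin m → ℤ) : ℤ :=
  ∑ k : Fin m, ∑ l : Fin m, a k * b l *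
    (if (k:ℕ) = (l:ℕ) then -(d (ii ((k:ℕ)+1)))
     else if (l:ℕ) < (k:ℕ) then
       -(d (ii ((l:ℕ)+1)) * A (ii ((l:ℕ)+1)) (ii ((k:ℕ)+1)))
     else 0)

/-- The entry `b_{pk}` of the exchange matrix `B̃_𝐢`. -/
noncomputable def bcoef (A : Fin n → Fin n → ℤ) (ii : ℕ → Fin n) (m p k : ℕ) : ℤ :=
  if p = kminus ii k then -1
  else if p < k ∧ k < kplus ii m p ∧ kplus ii m p < kplus ii m k then
    -(A (ii p) (ii k))
  else if k < p ∧ p < kplus ii m k ∧ kplus ii m k < kplus ii m p then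
    A (ii p) (ii k)
  else if p = kplus ii m k then 1
  else 0

/-- The column `𝐛^k = ∑_p b_{pk} ε_p ∈ ℤ^m` of the exchange matrix. -/
noncomputable def bvec (A : Fin n → Fin n → ℤ) (ii : ℕ → Fin n) (m k : ℕ) :
    Fin m → ℤ :=
  fun p => bcoef A ii m ((p:ℕ)+1) k

/-- `ρ_𝐢⁺(ε_k) = ε_k + ∑_{ℓ<k, ℓ⁺=m+1} a_{i_ℓ i_k} ε_ℓ`. -/
noncomputable def rhoPE (A : Fin n → Fin n → ℤ) (ii : ℕ → Fin n) (m k : ℕ) :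
    Fin m → ℤ :=
  eps m k + ∑ l : Fin m, (if (l:ℕ)+1 < k ∧ kplus ii m ((l:ℕ)+1) = m+1
      then A (ii ((l:ℕ)+1)) (ii k) else 0) • eps m ((l:ℕ)+1)

/-- `ρ_𝐢⁻(ε_k) = ε_k - ∑_{ℓ≤k, ℓ⁺=m+1} a_{i_ℓ i_k} ε_ℓ`. -/
noncomputable def rhoME (A : Fin n → Fin n → ℤ) (ii : ℕ → Fin n) (m k : ℕ) :
    Fin m → ℤ :=
  eps m k - ∑ l : Fin m, (if (l:ℕ)+1 ≤ k ∧ kplus ii m ((l:ℕ)+1) = m+1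
      then A (ii ((l:ℕ)+1)) (ii k) else 0) • eps m ((l:ℕ)+1)

/-- The endomorphism `ρ_𝐢⁺` of `ℤ^m`. -/
noncomputable def rhoPMap (A : Fin n → Fin n → ℤ) (ii : ℕ → Fin n) (m : ℕ)
    (v : Fin m → ℤ) : Fin m → ℤ :=
  ∑ k : Fin m, v k • rhoPE A ii m ((k:ℕ)+1)

/-- The endomorphism `ρ_𝐢⁻` of `ℤ^m`. -/
noncomputable def rhoMMap (A : Fin n → Fin n → ℤ) (ii : ℕ → Fin n) (m : ℕ)
    (v : Fin m → ℤ) : Fin m → ℤ :=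
  ∑ k : Fin m, v k • rhoME A ii m ((k:ℕ)+1)

/-- `𝐚_λ = -∑_{k=1}^m (w_k^∨ α_{i_k}^∨, w_m λ) ε_k ∈ ℤ^m`. -/
def avec (A : Fin n → Fin n → ℤ) (ii : ℕ → Fin n) (m : ℕ) (lam : PLat n) :
    Fin m → ℤ :=
  fun k => -(pairQP A (wQ A ii ((k:ℕ)+1) (coroot (ii ((k:ℕ)+1)))) (wP A ii m lam))

/-- `|𝐚| = ∑_{k=1}^m a_k α_{i_k} ∈ 𝒬 ⊆ 𝒫`. -/
def degP (ii : ℕ → Fin n) (m : ℕ) (a : Fin m → ℤ) : PLat n :=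
  (fun j => ∑ k : Fin m, if ii ((k:ℕ)+1) = j then a k else 0, 0)

/-- The pairing `(μ, λ) = ∑ mᵢ dᵢ (αᵢ^∨, λ)` for `μ = ∑ mᵢ αᵢ ∈ 𝒬` and `λ ∈ 𝒫`
(induced by identifying `αᵢ` with `dᵢ αᵢ^∨`). -/
def pairAl (A : Fin n → Fin n → ℤ) (d : Fin n → ℤ) (mu lam : PLat n) : ℤ :=
  ∑ j, mu.1 j * (d j * pairQP A (coroot j) lam)

/-!
Write `x_s = w_s^∨ α_{i_s}^∨` and `g(s, ℓ) = (x_s, w_ℓ ω_{i_ℓ})`, so that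
`φ'_𝐢(ε_ℓ) = -∑_{s ≤ ℓ} g(s, ℓ) ε_s`. The identities
`w_ℓ ω_{i_ℓ} = w_{ℓ⁻} ω_{i_ℓ} - w_{ℓ-1} α_{i_ℓ}` and
`w_r α_j = w_{r-1} α_j - a_{i_r j} w_{r-1} α_{i_r}`, together with `(x_s, w_s μ) = (α_{i_s}^∨, μ)`,
give a recursion for `g(s, ·)` which says exactly that `φ'_𝐢 (φ_𝐢 ε_k) = ε_k`. Since
`𝐛^k = φ_𝐢(ε_k) - φ_𝐢(ε_{k⁺})`, this yields `φ'_𝐢(𝐛^k) = ε_k - ε_{k⁺}`.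

Then `Λ_𝐢(ε_k - ε_{k⁺}, φ'_𝐢(ε_ℓ))` is `d_{i_k}` times the sum, over the windows `[k, k⁺)` and
`(k, k⁺]` cut off at `ℓ`, of the increments of `f(r) = (w_r^∨ α_{i_k}^∨, w_ℓ ω_{i_ℓ})`.
The sums telescope; `f` changes sign at `r = k` and `r = k⁺` (where `i_r = i_k`), and
`f(ℓ) = δ_{i_k i_ℓ}`, which leaves `2 δ_{kℓ}`.
-/

lemma sum_fin_eq_sum_Icc {M : Type*} [AddCommMonoid M] (m : ℕ) (f : ℕ → M) :
    ∑ q : Fin m, f (q + 1) = ∑ q ∈ Icc 1 m, f q := by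
  rw [Fin.sum_univ_eq_sum_range (fun q => f (q + 1)), range_eq_Ico, sum_Ico_add']
  rfl

lemma sign_sub_sub_sign_sub {a b : ℕ} (hab : a < b) (x : ℕ) :
    ((a : ℤ) - x).sign - ((b : ℤ) - x).sign =
      -((if a ≤ x ∧ x < b then 1 else 0) + (if a < x ∧ x ≤ b then 1 else 0)) := by
  rcases lt_trichotomy x a with h | rfl | h
  · rw [Int.sign_eq_one_of_pos (by omega), Int.sign_eq_one_of_pos (by omega)]
    simp [show ¬ a ≤ x by omega, show ¬ a < x by omega]
  · rw [sub_self, Int.sign_zero, Int.sign_eq_one_of_pos (by omega)]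
    simp [hab]
  · rcases lt_trichotomy x b with h' | rfl | h'
    · rw [Int.sign_eq_neg_one_of_neg (by omega), Int.sign_eq_one_of_pos (by omega)]
      simp [h.le, h, h', h'.le]
    · rw [Int.sign_eq_neg_one_of_neg (by omega), sub_self, Int.sign_zero]
      simp [h]
    · rw [Int.sign_eq_neg_one_of_neg (by omega), Int.sign_eq_neg_one_of_neg (by omega)]
      simp [show ¬ x < b by omega, show ¬ x ≤ b by omega]

lemma sum_Icc_ite_eq_sum_Ioc {M : Type*} [AddCommMonoid M] (g : ℕ → M) {a b m : ℕ} (hb : b ≤ m) :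
    ∑ q ∈ Icc 1 m, (if a < q ∧ q ≤ b then g q else 0) = ∑ q ∈ Ioc a b, g q := by
  rw [← sum_filter]
  congr 1
  ext q
  simp only [mem_filter, mem_Icc, mem_Ioc]
  omega

lemma sum_Ioc_sub_pred {G : Type*} [AddCommGroup G] (f : ℕ → G) (a b : ℕ) :
    ∑ q ∈ Ioc a b, (f q - f (q - 1)) = f (max a b) - f a := by
  rcases le_total a b with h | h
  · rw [max_eq_right h]
    induction b, h using Nat.le_induction with
    | base => simp
    | succ b h ih => rw [sum_Ioc_succ_top h, ih, Nat.add_sub_cancel]; abel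
  · rw [Ioc_eq_empty (by omega), max_eq_left h, sum_empty, sub_self]

section Occurrences

variable {n : ℕ} (ii : ℕ → Fin n) {m : ℕ}

lemma kplus_spec (k : ℕ) :
    (k < kplus ii m k ∧ kplus ii m k ≤ m ∧ ii (kplus ii m k) = ii k) ∨ kplus ii m k = m + 1 :=
  Nat.sInf_mem (s := {l | k < l ∧ l ≤ m ∧ ii l = ii k} ∪ {m + 1}) ⟨m + 1, Or.inr rfl⟩

lemma lt_kplus {k : ℕ} (hk : k ≤ m) : k < kplus ii m k := by
  rcases kplus_spec ii (m := m) k with h | h <;> omega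

lemma lt_kplus_of_kplus_le {k : ℕ} (h : kplus ii m k ≤ m) : k < kplus ii m k := by
  rcases kplus_spec ii (m := m) k with h' | h' <;> omega

lemma ii_kplus {k : ℕ} (h : kplus ii m k ≤ m) : ii (kplus ii m k) = ii k := by
  rcases kplus_spec ii (m := m) k with h' | h'
  · exact h'.2.2
  · omega

lemma kplus_le {k r : ℕ} (h₁ : k < r) (h₂ : r ≤ m) (h₃ : ii r = ii k) : kplus ii m k ≤ r :=
  Nat.sInf_le (Or.inl ⟨h₁, h₂, h₃⟩)

lemma bddAbove_kminus_set (k : ℕ) : BddAbove ({l | 1 ≤ l ∧ l < k ∧ ii l = ii k} ∪ {0}) :=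
  ⟨k, fun l hl => by rcases hl with h | h <;> simp_all; omega⟩

lemma kminus_spec (k : ℕ) :
    (1 ≤ kminus ii k ∧ kminus ii k < k ∧ ii (kminus ii k) = ii k) ∨ kminus ii k = 0 :=
  Nat.sSup_mem ⟨0, Or.inr rfl⟩ (bddAbove_kminus_set ii k)

lemma kminus_lt {k : ℕ} (hk : 1 ≤ k) : kminus ii k < k := by
  rcases kminus_spec ii k with h | h <;> omega

lemma ii_kminus {k : ℕ} (h : 1 ≤ kminus ii k) : ii (kminus ii k) = ii k := by
  rcases kminus_spec ii k with h' | h'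
  · exact h'.2.2
  · omega

lemma le_kminus {k r : ℕ} (h₁ : 1 ≤ r) (h₂ : r < k) (h₃ : ii r = ii k) : r ≤ kminus ii k :=
  le_csSup (bddAbove_kminus_set ii k) (Or.inl ⟨h₁, h₂, h₃⟩)

lemma kplus_kminus {l : ℕ} (h₁ : 1 ≤ kminus ii l) (h₂ : l ≤ m) : kplus ii m (kminus ii l) = l := by
  have hlt : kminus ii l < l := by rcases kminus_spec ii l with h | h <;> omega
  have hii := ii_kminus ii h₁
  have hle := kplus_le ii hlt h₂ hii.symm
  by_contra hne
  have := lt_kplus ii (m := m) (k := kminus ii l) (by omega)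
  have := le_kminus ii (r := kplus ii m (kminus ii l)) (k := l) (by omega) (by omega)
    ((ii_kplus ii (by omega)).trans hii)
  omega

lemma kminus_kplus {k : ℕ} (h₁ : 1 ≤ k) (h₂ : kplus ii m k ≤ m) : kminus ii (kplus ii m k) = k := by
  have hlt := lt_kplus_of_kplus_le ii h₂
  have hii := ii_kplus ii h₂
  have hle := le_kminus ii h₁ hlt hii.symm
  by_contra hne
  have := kminus_lt ii (k := kplus ii m k) (by omega)
  have := kplus_le ii (m := m) (k := k) (r := kminus ii (kplus ii m k)) (by omega) (by omega)
    ((ii_kminus ii (by omega)).trans hii)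
  omega

lemma kplus_eq_iff {p k : ℕ} (hp : 1 ≤ p) (hpk : p < k) (hk : k ≤ m) :
    kplus ii m p = k ↔ kminus ii k = p := by
  constructor
  · rintro rfl; exact kminus_kplus ii hp hk
  · rintro rfl; exact kplus_kminus ii hp hk

lemma sum_Ico_mul_kminus (c : Fin n → ℤ) {f : ℕ → ℤ} (hf : f 0 = 0) {k : ℕ} (hk : k ≤ m) :
    ∑ q ∈ Ico 1 k, c (ii q) * f (kminus ii q) =
      ∑ p ∈ Ico 1 k, if kplus ii m p < k then c (ii p) * f p else 0 := by
  rw [← sum_filter, ← sum_filter_of_ne (p := fun q => 1 ≤ kminus ii q)]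
  · refine sum_nbij' (kminus ii) (kplus ii m) ?_ ?_ ?_ ?_ ?_ <;> intro q hq <;>
      simp only [mem_filter, mem_Ico] at hq ⊢
    · have := kminus_lt ii (k := q) (by omega)
      have := kplus_kminus ii hq.2 (m := m) (by omega)
      omega
    · have := lt_kplus ii (m := m) (k := q) (by omega)
      have := kminus_kplus ii hq.1.1 (m := m) (by omega)
      omega
    · exact kplus_kminus ii hq.2 (by omega)
    · exact kminus_kplus ii hq.1.1 (by omega)
    · rw [ii_kminus ii hq.2]
  · intro q _ hq
    by_contra h
    rw [show kminus ii q = 0 by omega, hf, mul_zero] at hq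
    exact hq rfl

-- Along the occurrences of each letter the differences telescope; what survives is its last
-- occurrence `p < k`, i.e. the one with `k ≤ p⁺`, and `p⁺ = k` singles out `p = k⁻`.
lemma sum_Ico_mul_kminus_sub (c : Fin n → ℤ) {f : ℕ → ℤ} (hf : f 0 = 0) {k : ℕ} (hk : k ≤ m) :
    ∑ q ∈ Ico 1 k, c (ii q) * (f (kminus ii q) - f q) =
      -(c (ii k) * f (kminus ii k) +
        ∑ p ∈ Ico 1 k, if k < kplus ii m p then c (ii p) * f p else 0) := by
  have hsplit : ∀ p ∈ Ico 1 k, c (ii p) * f p =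
      (if kplus ii m p < k then c (ii p) * f p else 0) +
        (if kminus ii k = p then c (ii p) * f p else 0) +
        (if k < kplus ii m p then c (ii p) * f p else 0) := by
    intro p hp
    rw [mem_Ico] at hp
    simp only [← kplus_eq_iff ii hp.1 hp.2 hk]
    split_ifs <;> omega
  have hkminus : ∑ p ∈ Ico 1 k, (if kminus ii k = p then c (ii p) * f p else 0) =
      c (ii k) * f (kminus ii k) := by
    rw [sum_ite_eq]
    rcases kminus_spec ii k with h | h
    · rw [if_pos (by simp only [mem_Ico]; omega), ii_kminus ii h.1]
    · rw [if_neg (by simp [h]), h, hf, mul_zero]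
  simp only [mul_sub, sum_sub_distrib, sum_Ico_mul_kminus ii c hf hk, sum_congr rfl hsplit,
    sum_add_distrib, hkminus]
  ring

end Occurrences

section Lattice

variable {n : ℕ} (A : Fin n → Fin n → ℤ)

lemma pairQP_eq_sum (x : QvLat n) (lam : PLat n) :
    pairQP A x lam = ∑ a, x a * (∑ b, A a b * lam.1 b + lam.2 a) := by
  simp only [pairQP, mul_add, sum_add_distrib, mul_sum, mul_assoc]

lemma pairQP_sub_left (x y : QvLat n) (lam : PLat n) :
    pairQP A (x - y) lam = pairQP A x lam - pairQP A y lam := by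
  simp only [pairQP_eq_sum, Pi.sub_apply, sub_mul, sum_sub_distrib]

lemma pairQP_smul_left (c : ℤ) (x : QvLat n) (lam : PLat n) :
    pairQP A (c • x) lam = c * pairQP A x lam := by
  simp only [pairQP_eq_sum, Pi.smul_apply, smul_eq_mul, mul_sum, mul_assoc]

lemma pairQP_neg_left (x : QvLat n) (lam : PLat n) : pairQP A (-x) lam = -pairQP A x lam := by
  simpa using pairQP_smul_left A (-1) x lam

lemma pairQP_sub_right (x : QvLat n) (lam mu : PLat n) :
    pairQP A x (lam - mu) = pairQP A x lam - pairQP A x mu := by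
  simp only [pairQP, Prod.fst_sub, Prod.snd_sub, Pi.sub_apply, mul_sub, sum_sub_distrib]
  ring

lemma pairQP_smul_right (c : ℤ) (x : QvLat n) (lam : PLat n) :
    pairQP A x (c • lam) = c * pairQP A x lam := by
  simp only [pairQP, Prod.smul_fst, Prod.smul_snd, Pi.smul_apply, smul_eq_mul, mul_add, mul_sum]
  congr 1
  · exact sum_congr rfl fun a _ => sum_congr rfl fun b _ => by ring
  · exact sum_congr rfl fun a _ => by ring

lemma pairQP_coroot (i : Fin n) (lam : PLat n) :
    pairQP A (coroot i) lam = ∑ b, A i b * lam.1 b + lam.2 i := by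
  simp [pairQP_eq_sum, coroot]

lemma pairQP_alP (x : QvLat n) (j : Fin n) : pairQP A x (alP j) = ∑ a, x a * A a j := by
  simp [pairQP_eq_sum, alP]

lemma pairQP_coroot_alP (i j : Fin n) : pairQP A (coroot i) (alP j) = A i j := by
  simp [pairQP_alP, coroot]

lemma pairQP_coroot_omP (i j : Fin n) : pairQP A (coroot i) (omP j) = if i = j then 1 else 0 := by
  simp [pairQP_coroot, omP]

lemma sP_eq (a : Fin n) (lam : PLat n) : sP A a lam = lam - pairQP A (coroot a) lam • alP a := by
  ext j
  · by_cases h : j = a <;> simp [sP, alP, pairQP_coroot, h]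
  · simp [sP, alP]

lemma sQ_eq (a : Fin n) (x : QvLat n) : sQ A a x = x - pairQP A x (alP a) • coroot a := by
  ext j
  by_cases h : j = a <;> simp [sQ, coroot, pairQP_alP, h, mul_comm]

lemma sP_sub (a : Fin n) (lam mu : PLat n) : sP A a (lam - mu) = sP A a lam - sP A a mu := by
  simp only [sP_eq, pairQP_sub_right, sub_smul]
  abel

lemma sP_smul (a : Fin n) (c : ℤ) (lam : PLat n) : sP A a (c • lam) = c • sP A a lam := by
  simp only [sP_eq, pairQP_smul_right, mul_smul, smul_sub]

lemma sQ_sub (a : Fin n) (x y : QvLat n) : sQ A a (x - y) = sQ A a x - sQ A a y := by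
  simp only [sQ_eq, pairQP_sub_left, sub_smul]
  abel

lemma sQ_smul (a : Fin n) (c : ℤ) (x : QvLat n) : sQ A a (c • x) = c • sQ A a x := by
  simp only [sQ_eq, pairQP_smul_left, mul_smul, smul_sub]

lemma sP_omP_self (a : Fin n) : sP A a (omP a) = omP a - alP a := by
  simp [sP_eq, pairQP_coroot_omP]

lemma sP_omP_of_ne {a j : Fin n} (h : j ≠ a) : sP A a (omP j) = omP j := by
  simp [sP_eq, pairQP_coroot_omP, h.symm]

lemma sP_alP (a j : Fin n) : sP A a (alP j) = alP j - A a j • alP a := by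
  rw [sP_eq, pairQP_coroot_alP]

lemma sQ_coroot (a j : Fin n) : sQ A a (coroot j) = coroot j - A j a • coroot a := by
  rw [sQ_eq, pairQP_coroot_alP]

lemma pairQP_sQ_sP (hA : ∀ i, A i i = 2) (a : Fin n) (x : QvLat n) (lam : PLat n) :
    pairQP A (sQ A a x) (sP A a lam) = pairQP A x lam := by
  rw [sQ_eq, sP_eq, pairQP_sub_left, pairQP_sub_right, pairQP_sub_right, pairQP_smul_left,
    pairQP_smul_right, pairQP_smul_right, pairQP_smul_left, pairQP_coroot_alP, hA]
  ring

variable (ii : ℕ → Fin n)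

lemma wP_sub (r : ℕ) (lam mu : PLat n) : wP A ii r (lam - mu) = wP A ii r lam - wP A ii r mu := by
  induction r generalizing lam mu with
  | zero => rfl
  | succ r ih => simp only [wP, Function.comp_apply, sP_sub, ih]

lemma wP_smul (r : ℕ) (c : ℤ) (lam : PLat n) : wP A ii r (c • lam) = c • wP A ii r lam := by
  induction r generalizing lam with
  | zero => rfl
  | succ r ih => simp only [wP, Function.comp_apply, sP_smul, ih]

lemma wQ_sub (r : ℕ) (x y : QvLat n) : wQ A ii r (x - y) = wQ A ii r x - wQ A ii r y := by
  induction r generalizing x y with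
  | zero => rfl
  | succ r ih => simp only [wQ, Function.comp_apply, sQ_sub, ih]

lemma wQ_smul (r : ℕ) (c : ℤ) (x : QvLat n) : wQ A ii r (c • x) = c • wQ A ii r x := by
  induction r generalizing x with
  | zero => rfl
  | succ r ih => simp only [wQ, Function.comp_apply, sQ_smul, ih]

lemma pairQP_wQ_wP (hA : ∀ i, A i i = 2) (r : ℕ) (x : QvLat n) (lam : PLat n) :
    pairQP A (wQ A ii r x) (wP A ii r lam) = pairQP A x lam := by
  induction r generalizing x lam with
  | zero => rfl
  | succ r ih => simp only [wQ, wP, Function.comp_apply, ih, pairQP_sQ_sP A hA]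

lemma wP_succ_omP_self (r : ℕ) :
    wP A ii (r + 1) (omP (ii (r + 1))) =
      wP A ii r (omP (ii (r + 1))) - wP A ii r (alP (ii (r + 1))) := by
  simp only [wP, Function.comp_apply, sP_omP_self, wP_sub]

lemma wP_succ_alP (r : ℕ) (j : Fin n) :
    wP A ii (r + 1) (alP j) =
      wP A ii r (alP j) - A (ii (r + 1)) j • wP A ii r (alP (ii (r + 1))) := by
  simp only [wP, Function.comp_apply, sP_alP, wP_sub, wP_smul]

lemma wQ_succ_coroot (r : ℕ) (j : Fin n) :
    wQ A ii (r + 1) (coroot j) =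
      wQ A ii r (coroot j) - A j (ii (r + 1)) • wQ A ii r (coroot (ii (r + 1))) := by
  simp only [wQ, Function.comp_apply, sQ_coroot, wQ_sub, wQ_smul]

lemma wQ_succ_coroot_self (hA : ∀ i, A i i = 2) (r : ℕ) :
    wQ A ii (r + 1) (coroot (ii (r + 1))) = -wQ A ii r (coroot (ii (r + 1))) := by
  rw [wQ_succ_coroot, hA, two_smul]
  abel

lemma wP_omP_of_forall_ne {a b : ℕ} (hab : a ≤ b) {j : Fin n}
    (hj : ∀ r, a < r → r ≤ b → ii r ≠ j) : wP A ii b (omP j) = wP A ii a (omP j) := by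
  induction b, hab using Nat.le_induction with
  | base => rfl
  | succ b hab ih =>
    simp only [wP, Function.comp_apply,
      sP_omP_of_ne A (hj (b + 1) (by omega) le_rfl).symm]
    exact ih fun r h₁ h₂ => hj r h₁ (by omega)

end Lattice

section PhiPrimeCoefficients

variable {n : ℕ} (A : Fin n → Fin n → ℤ) (ii : ℕ → Fin n)

def wPair (j : Fin n) (r l : ℕ) : ℤ :=
  pairQP A (wQ A ii r (coroot j)) (wP A ii l (omP (ii l)))

-- In 1-based coordinates `φ'_𝐢(ε_ℓ) = -∑_s phiCoeff' s ℓ ε_s` and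
-- `φ_𝐢(ε_k) = -∑_ℓ phiCoeff m k ℓ ε_ℓ` (`phiE'_apply`, `phiE_apply`).
def phiCoeff' (s l : ℕ) : ℤ :=
  if s ≤ l then wPair A ii (ii s) s l else 0

noncomputable def phiCoeff (m k l : ℕ) : ℤ :=
  (if l = k then 1 else 0) + (if l = kminus ii k then 1 else 0) +
    (if l < k ∧ k < kplus ii m l then A (ii l) (ii k) else 0)

lemma phiCoeff'_of_lt {s l : ℕ} (h : l < s) : phiCoeff' A ii s l = 0 :=
  if_neg (by omega)

lemma wP_omP_self_eq {q : ℕ} (hq : 1 ≤ q) :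
    wP A ii q (omP (ii q)) =
      wP A ii (kminus ii q) (omP (ii q)) - wP A ii (q - 1) (alP (ii q)) := by
  obtain ⟨r, rfl⟩ : ∃ r, q = r + 1 := ⟨q - 1, by omega⟩
  have hlt := kminus_lt ii (k := r + 1) hq
  rw [wP_succ_omP_self, wP_omP_of_forall_ne A ii (a := kminus ii (r + 1)) (by omega)
    fun t h₁ h₂ ht => by have := le_kminus ii (by omega) (by omega) ht; omega]
  rfl

variable {A}

lemma wPair_self (hA : ∀ i, A i i = 2) (j : Fin n) (l : ℕ) :
    wPair A ii j l l = if j = ii l then 1 else 0 := by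
  rw [wPair, pairQP_wQ_wP A ii hA, pairQP_coroot_omP]

lemma phiCoeff'_self (hA : ∀ i, A i i = 2) (s : ℕ) : phiCoeff' A ii s s = 1 := by
  simp [phiCoeff', wPair_self ii hA]

lemma pairQP_wP_kminus_omP (hA : ∀ i, A i i = 2) {s q : ℕ} (hs : 1 ≤ s) (hsq : s < q) :
    pairQP A (wQ A ii s (coroot (ii s))) (wP A ii (kminus ii q) (omP (ii q))) =
      phiCoeff' A ii s (kminus ii q) := by
  by_cases h : s ≤ kminus ii q
  · rw [phiCoeff', if_pos h, wPair, ii_kminus ii (by omega)]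
  · rw [phiCoeff'_of_lt A ii (by omega),
      ← wP_omP_of_forall_ne A ii (b := s) (by omega)
        fun r h₁ h₂ hr => by have := le_kminus ii (by omega) (by omega) hr; omega,
      pairQP_wQ_wP A ii hA, pairQP_coroot_omP, if_neg fun hr => by
        have := le_kminus ii hs hsq hr; omega]

lemma pairQP_wP_pred_alP (hA : ∀ i, A i i = 2) {s q : ℕ} (hs : 1 ≤ s) (hsq : s < q) :
    pairQP A (wQ A ii s (coroot (ii s))) (wP A ii (q - 1) (alP (ii q))) =
      phiCoeff' A ii s (kminus ii q) - phiCoeff' A ii s q := by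
  rw [← pairQP_wP_kminus_omP ii hA hs hsq, phiCoeff', if_pos hsq.le, wPair,
    wP_omP_self_eq A ii (by omega), pairQP_sub_right]
  ring

lemma pairQP_wP_alP (hA : ∀ i, A i i = 2) {s k : ℕ} (hs : 1 ≤ s) (hsk : s < k) (j : Fin n) :
    pairQP A (wQ A ii s (coroot (ii s))) (wP A ii (k - 1) (alP j)) =
      -∑ q ∈ Ico 1 k, A (ii q) j * (phiCoeff' A ii s (kminus ii q) - phiCoeff' A ii s q) := by
  induction k, hsk using Nat.le_induction with
  | base =>
    have hbelow : ∑ q ∈ Ico 1 s, A (ii q) j * (phiCoeff' A ii s (kminus ii q) - phiCoeff' A ii s q)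
        = 0 := sum_eq_zero fun q hq => by
      have := kminus_lt ii (k := q) (mem_Ico.1 hq).1
      rw [phiCoeff'_of_lt A ii (mem_Ico.1 hq).2, phiCoeff'_of_lt A ii (by simp at hq; omega)]
      ring
    rw [sum_Ico_succ_top hs, hbelow, phiCoeff'_of_lt A ii (kminus_lt ii hs),
      phiCoeff'_self ii hA, Nat.succ_sub_one, pairQP_wQ_wP A ii hA, pairQP_coroot_alP]
    ring
  | succ k hsk ih =>
    obtain ⟨r, rfl⟩ : ∃ r, k = r + 1 := ⟨k - 1, by omega⟩
    have hstep := pairQP_wP_pred_alP ii hA hs (q := r + 1) (by omega)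
    rw [Nat.add_sub_cancel] at ih hstep
    rw [Nat.add_sub_cancel, wP_succ_alP, pairQP_sub_right, pairQP_smul_right, hstep, ih,
      sum_Ico_succ_top (show 1 ≤ r + 1 by omega)]
    ring

lemma phiCoeff'_recursion (hA : ∀ i, A i i = 2) {m s k : ℕ} (hs : 1 ≤ s) (hsk : s < k)
    (hk : k ≤ m) :
    phiCoeff' A ii s k + phiCoeff' A ii s (kminus ii k) +
      ∑ p ∈ Ico 1 k, (if k < kplus ii m p then A (ii p) (ii k) * phiCoeff' A ii s p else 0) =
      0 := by
  have hdiff := pairQP_wP_pred_alP ii hA hs hsk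
  have hsum := pairQP_wP_alP ii hA hs hsk (ii k)
  have hchain := sum_Ico_mul_kminus_sub ii (fun j => A j (ii k))
    (phiCoeff'_of_lt A ii (by omega : 0 < s)) hk
  rw [hA] at hchain
  linear_combination hdiff - hsum + hchain

lemma sum_phiCoeff_mul_phiCoeff' (hA : ∀ i, A i i = 2) {m s k : ℕ} (hs : 1 ≤ s) (hk₁ : 1 ≤ k)
    (hk : k ≤ m) :
    ∑ l ∈ Icc 1 m, phiCoeff A ii m k l * phiCoeff' A ii s l = if s = k then 1 else 0 := by
  have hlt := kminus_lt ii hk₁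
  have hfilter : ∑ l ∈ Icc 1 m,
      (if l < k ∧ k < kplus ii m l then A (ii l) (ii k) * phiCoeff' A ii s l else 0) =
      ∑ p ∈ Ico 1 k, (if k < kplus ii m p then A (ii p) (ii k) * phiCoeff' A ii s p else 0) := by
    rw [← sum_filter, ← sum_filter]
    congr 1
    ext p
    simp only [mem_filter, mem_Icc, mem_Ico]
    omega
  have hkminus : (if kminus ii k ∈ Icc 1 m then phiCoeff' A ii s (kminus ii k) else 0) =
      phiCoeff' A ii s (kminus ii k) := by
    rcases kminus_spec ii k with h | h
    · rw [if_pos (mem_Icc.2 ⟨h.1, by omega⟩)]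
    · rw [h, phiCoeff'_of_lt A ii hs, ite_self]
  simp only [phiCoeff, add_mul, ite_mul, one_mul, zero_mul, sum_add_distrib, sum_ite_eq',
    if_pos (mem_Icc.2 ⟨hk₁, hk⟩), hkminus, hfilter]
  rcases lt_or_ge s k with hsk | hks
  · rw [phiCoeff'_recursion ii hA hs hsk hk, if_neg (by omega)]
  · rw [phiCoeff'_of_lt A ii (by omega : kminus ii k < s),
      sum_eq_zero fun p hp => by
        rw [phiCoeff'_of_lt A ii (by simp at hp; omega), mul_zero, ite_self]]
    rcases eq_or_lt_of_le hks with rfl | hks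
    · simp [phiCoeff'_self ii hA]
    · simp [phiCoeff'_of_lt A ii hks, hks.ne']

end PhiPrimeCoefficients

section PhiVectors

variable {n : ℕ} (A : Fin n → Fin n → ℤ) (ii : ℕ → Fin n) {m : ℕ}

lemma sum_smul_eps_apply (c : Fin m → ℤ) (p : Fin m) :
    (∑ l : Fin m, c l • eps m (l + 1)) p = c p := by
  simp [eps, Fin.val_inj]

lemma phiE_apply (k : ℕ) (p : Fin m) : phiE A ii m k p = -phiCoeff A ii m k (p + 1) := by
  simp only [phiE, Pi.sub_apply, Pi.neg_apply, sum_smul_eps_apply, phiCoeff, eps]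
  ring

lemma phiE'_apply (l : ℕ) (p : Fin m) : phiE' A ii m l p = -phiCoeff' A ii (p + 1) l := by
  simp only [phiE', Pi.neg_apply, sum_smul_eps_apply, phiCoeff', wPair]

lemma phiMap'_apply (v : Fin m → ℤ) (p : Fin m) :
    phiMap' A ii m v p = ∑ q : Fin m, v q * phiE' A ii m (q + 1) p := by
  simp [phiMap', Finset.sum_apply]

lemma phiMap'_sub (u v : Fin m → ℤ) :
    phiMap' A ii m (u - v) = phiMap' A ii m u - phiMap' A ii m v := by
  simp [phiMap', sub_smul, sum_sub_distrib]

lemma phiMap'_eps {l : ℕ} (hl₁ : 1 ≤ l) (hl : l ≤ m) :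
    phiMap' A ii m (eps m l) = phiE' A ii m l := by
  simp only [phiMap', eps, ite_smul, one_smul, zero_smul]
  rw [sum_fin_eq_sum_Icc m fun q => if q = l then phiE' A ii m q else 0, sum_ite_eq',
    if_pos (mem_Icc.2 ⟨hl₁, hl⟩)]

variable {A}

lemma phiMap'_phiE (hA : ∀ i, A i i = 2) {k : ℕ} (hk₁ : 1 ≤ k) (hk : k ≤ m) :
    phiMap' A ii m (phiE A ii m k) = eps m k := by
  funext p
  simp only [phiMap'_apply, phiE_apply, phiE'_apply, neg_mul_neg]
  rw [sum_fin_eq_sum_Icc m fun l => phiCoeff A ii m k l * phiCoeff' A ii (p + 1) l,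
    sum_phiCoeff_mul_phiCoeff' ii hA (by omega) hk₁ hk]
  rfl

lemma bcoef_eq {p k : ℕ} (hp : 1 ≤ p) (hk₁ : 1 ≤ k) (hk : kplus ii m k ≤ m) :
    bcoef A ii m p k = phiCoeff A ii m (kplus ii m k) p - phiCoeff A ii m k p := by
  have hkk := lt_kplus_of_kplus_le ii hk
  have hkminus := kminus_lt ii hk₁
  have hkminus_succ : p = kminus ii k → kplus ii m p = k := by
    rintro rfl; exact kplus_kminus ii hp (by omega)
  have hk_succ : p = k → kplus ii m p = kplus ii m k := by rintro rfl; rfl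
  have hinj : p < k → kplus ii m p ≠ kplus ii m k := fun hpk heq => by
    have hii : ii p = ii k := by rw [← ii_kplus ii (heq ▸ hk), heq, ii_kplus ii hk]
    have := kplus_le ii (m := m) hpk (by omega) hii.symm
    omega
  unfold bcoef phiCoeff
  rw [kminus_kplus ii hk₁ hk, ii_kplus ii hk]
  split_ifs <;> omega

lemma bvec_eq {k : ℕ} (hk₁ : 1 ≤ k) (hk : kplus ii m k ≤ m) :
    bvec A ii m k = phiE A ii m k - phiE A ii m (kplus ii m k) := by
  funext p
  rw [Pi.sub_apply, phiE_apply, phiE_apply, bvec, bcoef_eq ii (by omega) hk₁ hk]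
  ring

lemma phiMap'_bvec (hA : ∀ i, A i i = 2) {k : ℕ} (hk₁ : 1 ≤ k) (hk : kplus ii m k ≤ m) :
    phiMap' A ii m (bvec A ii m k) = eps m k - eps m (kplus ii m k) := by
  have := lt_kplus_of_kplus_le ii hk
  rw [bvec_eq ii hk₁ hk, phiMap'_sub, phiMap'_phiE ii hA hk₁ (by omega),
    phiMap'_phiE ii hA (by omega) hk]

end PhiVectors

section Lambda

variable {n : ℕ} {A : Fin n → Fin n → ℤ} (ii : ℕ → Fin n) {m : ℕ}

lemma wPair_succ_sub (hA : ∀ i, A i i = 2) (j : Fin n) (r l : ℕ) :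
    wPair A ii j (r + 1) l - wPair A ii j r l =
      A j (ii (r + 1)) * wPair A ii (ii (r + 1)) (r + 1) l := by
  rw [wPair, wPair, wPair, wQ_succ_coroot_self A ii hA, wQ_succ_coroot, pairQP_sub_left,
    pairQP_smul_left, pairQP_neg_left]
  ring

lemma wPair_succ_of_eq (hA : ∀ i, A i i = 2) {j : Fin n} {r : ℕ} (h : ii (r + 1) = j) (l : ℕ) :
    wPair A ii j (r + 1) l = -wPair A ii j r l := by
  subst h
  rw [wPair, wPair, wQ_succ_coroot_self A ii hA, pairQP_neg_left]

lemma phiCoeff'_mul_sign_sub (hA : ∀ i, A i i = 2) {k k' : ℕ} (hkk : k < k') (l : ℕ) {q : ℕ}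
    (hq : 1 ≤ q) :
    -phiCoeff' A ii q l * ((((k : ℤ) - q).sign - ((k' : ℤ) - q).sign) * A (ii k) (ii q)) =
      ((if k ≤ q ∧ q < k' then 1 else 0) + (if k < q ∧ q ≤ k' then 1 else 0)) *
        (if q ≤ l then wPair A ii (ii k) q l - wPair A ii (ii k) (q - 1) l else 0) := by
  obtain ⟨r, rfl⟩ : ∃ r, q = r + 1 := ⟨q - 1, by omega⟩
  rw [sign_sub_sub_sign_sub hkk, Nat.add_sub_cancel, wPair_succ_sub ii hA, phiCoeff']
  split_ifs <;> ring

lemma wPair_window_ends (hA : ∀ i, A i i = 2) {k l : ℕ} (hk₁ : 1 ≤ k) (hk : kplus ii m k ≤ m)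
    (hl : l ≤ m) :
    let f : ℕ → ℤ := fun r => wPair A ii (ii k) r l
    f (max (k - 1) (min (kplus ii m k - 1) l)) - f (k - 1) +
        (f (max k (min (kplus ii m k) l)) - f k) = 2 * (if k = l then 1 else 0) := by
  intro f
  have hkk := lt_kplus_of_kplus_le ii hk
  have hflip : ∀ r, 1 ≤ r → ii r = ii k → f r = -f (r - 1) := fun r hr h => by
    obtain ⟨r, rfl⟩ : ∃ s, r = s + 1 := ⟨r - 1, by omega⟩
    exact wPair_succ_of_eq ii hA h l
  have hfk := hflip k hk₁ rfl
  rcases lt_or_ge l k with hlk | hkl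
  · rw [max_eq_left (by omega), max_eq_left (by omega), if_neg (by omega)]
    ring
  rcases lt_or_ge l (kplus ii m k) with hlk' | hkl'
  · have hletter : ii k = ii l ↔ k = l := ⟨fun h => by
        by_contra hne
        have := kplus_le ii (m := m) (by omega : k < l) hl h.symm
        omega, fun h => h ▸ rfl⟩
    have hfl : f l = if k = l then 1 else 0 := by simp only [f, wPair_self ii hA, hletter]
    rw [max_eq_right (by omega), max_eq_right (by omega), min_eq_right (by omega),
      min_eq_right (by omega), hfk, hfl]
    ring
  · rw [max_eq_right (by omega), max_eq_right (by omega), min_eq_left (by omega),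
      min_eq_left (by omega), if_neg (by omega), hfk, hflip _ (by omega) (ii_kplus ii hk)]
    ring

variable (d : Fin n → ℤ)

lemma LamF_eq_sum_Icc {u v : Fin m → ℤ} {F G : ℕ → ℤ} (hu : ∀ p : Fin m, u p = F (p + 1))
    (hv : ∀ q : Fin m, v q = G (q + 1)) :
    LamF A d ii m u v =
      ∑ p ∈ Icc 1 m, F p *
        ∑ q ∈ Icc 1 m, G q * (((p : ℤ) - q).sign * (d (ii p) * A (ii p) (ii q))) := by
  rw [← sum_fin_eq_sum_Icc]
  refine sum_congr rfl fun p _ => ?_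
  rw [← sum_fin_eq_sum_Icc, mul_sum]
  refine sum_congr rfl fun q _ => ?_
  rw [hu, hv]
  push_cast
  ring_nf

lemma LamF_eps_sub_eps_kplus {k : ℕ} (hk₁ : 1 ≤ k) (hk : kplus ii m k ≤ m) {v : Fin m → ℤ}
    {G : ℕ → ℤ} (hv : ∀ q : Fin m, v q = G (q + 1)) :
    LamF A d ii m (eps m k - eps m (kplus ii m k)) v =
      d (ii k) * ∑ q ∈ Icc 1 m,
        G q * ((((k : ℤ) - q).sign - ((kplus ii m k : ℤ) - q).sign) * A (ii k) (ii q)) := by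
  have hkk := lt_kplus_of_kplus_le ii hk
  rw [LamF_eq_sum_Icc ii d (u := eps m k - eps m (kplus ii m k))
    (F := fun j => (if j = k then 1 else 0) - (if j = kplus ii m k then 1 else 0))
    (fun p => rfl) hv]
  simp only [sub_mul, ite_mul, one_mul, zero_mul, sum_sub_distrib, sum_ite_eq']
  rw [if_pos (mem_Icc.2 ⟨hk₁, by omega⟩), if_pos (mem_Icc.2 ⟨by omega, hk⟩), ii_kplus ii hk,
    mul_sum, ← sum_sub_distrib]
  exact sum_congr rfl fun q _ => by ring

lemma LamF_eps_sub_eps_kplus_phiE' (hA : ∀ i, A i i = 2) {k l : ℕ} (hk₁ : 1 ≤ k)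
    (hk : kplus ii m k ≤ m) (hl : l ≤ m) :
    LamF A d ii m (eps m k - eps m (kplus ii m k)) (phiE' A ii m l) =
      2 * d (ii k) * (if k = l then 1 else 0) := by
  have hkk := lt_kplus_of_kplus_le ii hk
  set f : ℕ → ℤ := fun r => wPair A ii (ii k) r l
  have hwindows : ∑ q ∈ Icc 1 m, -phiCoeff' A ii q l *
        ((((k : ℤ) - q).sign - ((kplus ii m k : ℤ) - q).sign) * A (ii k) (ii q)) =
      ∑ q ∈ Ioc (k - 1) (min (kplus ii m k - 1) l), (f q - f (q - 1)) +
        ∑ q ∈ Ioc k (min (kplus ii m k) l), (f q - f (q - 1)) := by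
    rw [← sum_Icc_ite_eq_sum_Ioc (a := k - 1) (b := min (kplus ii m k - 1) l) (m := m) _
        (by omega),
      ← sum_Icc_ite_eq_sum_Ioc (a := k) (b := min (kplus ii m k) l) (m := m) _ (by omega),
      ← sum_add_distrib]
    refine sum_congr rfl fun q hq => ?_
    rw [phiCoeff'_mul_sign_sub ii hA hkk l (mem_Icc.1 hq).1]
    split_ifs <;> first | omega | ring
  rw [LamF_eps_sub_eps_kplus ii d hk₁ hk (G := fun j => -phiCoeff' A ii j l) (phiE'_apply A ii l),
    hwindows, sum_Ioc_sub_pred, sum_Ioc_sub_pred, wPair_window_ends ii hA hk₁ hk hl]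
  ring

end Lambda

theorem Lambda_compat_general {n m : ℕ}
    (A : Fin n → Fin n → ℤ) (d : Fin n → ℤ)
    (hA : ∀ i, A i i = 2)
    (ii : ℕ → Fin n)
    (k : ℕ) (hk1 : 1 ≤ k) (hk2 : kplus ii m k ≤ m)
    (l : ℕ) (hl1 : 1 ≤ l) (hl2 : l ≤ m) :
    LamF A d ii m (phiMap' A ii m (bvec A ii m k)) (phiMap' A ii m (eps m l)) =
      2 * d (ii k) * (if k = l then 1 else 0) := by
  rw [phiMap'_bvec ii hA hk1 hk2, phiMap'_eps A ii hl1 hl2]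
  exact LamF_eps_sub_eps_kplus_phiE' ii d hA hk1 hk2 hl2

/-- compatibility of the pair `(Λ_𝐢, B̃_𝐢)`:
`Λ_𝐢(φ'_𝐢(𝐛^k), φ'_𝐢(ε_ℓ)) = 2 d_{i_k} δ_{kℓ}` for `k ∈ 𝐞𝐱`, `1 ≤ ℓ ≤ m`. -/
theorem Lambda_compat {n m : ℕ} (hm : 1 ≤ m)
    (A : Fin n → Fin n → ℤ) (d : Fin n → ℤ)
    (hA : ∀ i, A i i = 2) (hd : ∀ i, 0 < d i)
    (hsym : ∀ i j, d i * A i j = d j * A j i)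
    (ii : ℕ → Fin n)
    (k : ℕ) (hk1 : 1 ≤ k) (hk2 : kplus ii m k ≤ m)
    (l : ℕ) (hl1 : 1 ≤ l) (hl2 : l ≤ m) :
    LamF A d ii m (phiMap' A ii m (bvec A ii m k)) (phiMap' A ii m (eps m l)) =
      2 * d (ii k) * (if k = l then 1 else 0) :=
  Lambda_compat_general A d hA ii k hk1 hk2 l hl1 hl2
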